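/- Let R be a commutative ring, h a free R-module with basis {H_g}_{g ∈ G} (|G| = t), and let α_1,…,α_n ∈ h* and T_1^±,…,T_n^± ∈ h satisfy α_j(T_i^+) = p_{ij} and α_j(T_i^-) = p_{ji} for a matrix P = (p_{ij}). Given Φ = (φ_{gk}) ∈ M_t(R) antisymmetric, define the twisted coroots T^±_{Φ,ℓ} := T^±_ℓ ± ∑_{g,k} α_ℓ(H_g)·φ_{kg}·H_k. Then α_j(T^+_{Φ,i}) = (P_Φ)_{ij} and α_j(T^-_{Φ,i}) = (P_Φ)_{ji}, where P_Φ := P − A·Φ·Aᵀ and A := (α_ℓ(H_g))_{ℓ∈I}^{g∈G}. -/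

import Mathlib

open Matrix

/-- Let `R` be a commutative ring, `𝔥` a free `R`-module with basis `{H_g}` (of size `t`),
and let `α_1,…,α_n ∈ 𝔥*`, `T_1^±,…,T_n^± ∈ 𝔥` realize a matrix `P`, i.e.
`α_j(T_i^+) = P_{ij}` and `α_j(T_i^-) = P_{ji}`.  Given an antisymmetric `Φ = (φ_{gk})`,
the twisted coroots `T^±_{Φ,ℓ} := T^±_ℓ ± ∑_{g,k} α_ℓ(H_g)·φ_{kg}·H_k` satisfy
`α_j(T^+_{Φ,i}) = (P_Φ)_{ij}` and `α_j(T^-_{Φ,i}) = (P_Φ)_{ji}`, where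
`P_Φ := P − A·Φ·Aᵀ` with `A_{ℓg} := α_ℓ(H_g)`. -/
theorem twisted_coroots_realize_twisted_matrix
    {R : Type*} [CommRing R] {n t : ℕ}
    {𝔥 : Type*} [AddCommGroup 𝔥] [Module R 𝔥]
    (b : Module.Basis (Fin t) R 𝔥)
    (α : Fin n → (𝔥 →ₗ[R] R)) (Tp Tm : Fin n → 𝔥)
    (P : Matrix (Fin n) (Fin n) R)
    (hTp : ∀ i j, α j (Tp i) = P i j)
    (hTm : ∀ i j, α j (Tm i) = P j i)
    (Φ : Matrix (Fin t) (Fin t) R) (hΦ : Φᵀ = -Φ)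
    (A : Matrix (Fin n) (Fin t) R) (hA : ∀ ℓ g, A ℓ g = α ℓ (b g)) :
    ∀ i j,
      α j (Tp i + ∑ g : Fin t, ∑ k : Fin t, (α i (b g) * Φ k g) • b k)
          = (P - A * Φ * Aᵀ) i j ∧
      α j (Tm i - ∑ g : Fin t, ∑ k : Fin t, (α i (b g) * Φ k g) • b k)
          = (P - A * Φ * Aᵀ) j i := by
  intro i j
  have hΦ' : ∀ g k, Φ k g = -Φ g k := fun g k => by
    have := congrFun (congrFun hΦ g) k
    simpa [Matrix.transpose_apply] using this
  have key : α j (∑ g : Fin t, ∑ k : Fin t, (α i (b g) * Φ k g) • b k)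
      = ∑ g : Fin t, ∑ k : Fin t, A i g * Φ k g * A j k := by
    rw [map_sum]
    refine Finset.sum_congr rfl (fun g _ => ?_)
    rw [map_sum]
    refine Finset.sum_congr rfl (fun k _ => ?_)
    rw [LinearMap.map_smul, smul_eq_mul, hA i g, hA j k]
  have h1 : (A * Φ * Aᵀ) i j = ∑ g : Fin t, ∑ k : Fin t, A i g * Φ g k * A j k := by
    rw [Matrix.mul_apply, Finset.sum_comm]
    refine Finset.sum_congr rfl (fun g _ => ?_)
    rw [Matrix.mul_apply, Finset.sum_mul]
    exact Finset.sum_congr rfl (fun k _ => by rw [Matrix.transpose_apply])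
  have h2 : (A * Φ * Aᵀ) j i = ∑ g : Fin t, ∑ k : Fin t, A i g * Φ k g * A j k := by
    rw [Matrix.mul_apply]
    refine Finset.sum_congr rfl (fun g _ => ?_)
    rw [Matrix.mul_apply, Finset.sum_mul]
    exact Finset.sum_congr rfl (fun k _ => by rw [Matrix.transpose_apply]; ring)
  constructor
  · rw [map_add, hTp, key, Matrix.sub_apply, h1]
    have h3 : ∑ g : Fin t, ∑ k : Fin t, A i g * Φ g k * A j k
        = -∑ g : Fin t, ∑ k : Fin t, A i g * Φ k g * A j k := by
      rw [← Finset.sum_neg_distrib]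
      refine Finset.sum_congr rfl (fun g _ => ?_)
      rw [← Finset.sum_neg_distrib]
      exact Finset.sum_congr rfl (fun k _ => by rw [hΦ' g k]; ring)
    rw [h3]; ring
  · rw [map_sub, hTm, key, Matrix.sub_apply, h2]
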